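/- Let ω > ω_k > 0 and γ² > ω/2 + √(ω_k(ω−ω_k)). Then both ν_±² = (2γ²−ω) ± √((2γ²−ω)² − 4ω_k(ω−ω_k)) are positive reals, and the Hermitian matrix m_k(ν) = ν²I − 2γν(iJ) + 2diag(ω−ω_k, ω_k) satisfies: m_k(0) is positive definite, m_k(ν) has exactly one negative eigenvalue for ν_− < ν < ν_+, and m_k(ν) is positive definite for ν > ν_+. -/

import Mathlib

/-!
A 2×2 Hermitian matrix is positive definite when its determinant and trace are positive, and has
exactly one negative eigenvalue when its determinant is negative. For `m_k(ν)` the trace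
`2ν² + 2ω` is positive, and the determinant is the quadratic in `ν²`
`(ν² + 2(ω−ω_k))(ν² + 2ω_k) − 4γ²ν² = (ν² − ν_−²)(ν² − ν_+²)`, whose roots are real and positive
because `2γ² − ω > 2√(ω_k(ω−ω_k))`.
-/

open Matrix Complex
open scoped ComplexOrder

/-- The 2×2 Fourier block of the filament problem:
`m_k(ν) = ν² I − 2γν (iJ) + 2 diag(ω−ω_k, ω_k)`, with `iJ = !![0,-i; i,0]`. -/
noncomputable def mkF (ω ωk γ ν : ℝ) : Matrix (Fin 2) (Fin 2) ℂ :=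
  !![(ν ^ 2 + 2 * (ω - ωk) : ℝ), 2 * γ * ν * Complex.I;
     -(2 * γ * ν * Complex.I), (ν ^ 2 + 2 * ωk : ℝ)]

/-- `ν_±² = (2γ²−ω) ± √((2γ²−ω)² − 4ω_k(ω−ω_k))`. -/
noncomputable def νsqP (ω ωk γ : ℝ) : ℝ :=
  (2 * γ ^ 2 - ω) + Real.sqrt ((2 * γ ^ 2 - ω) ^ 2 - 4 * ωk * (ω - ωk))

noncomputable def νsqM (ω ωk γ : ℝ) : ℝ :=
  (2 * γ ^ 2 - ω) - Real.sqrt ((2 * γ ^ 2 - ω) ^ 2 - 4 * ωk * (ω - ωk))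

/-- Morse index: the number of negative eigenvalues (with multiplicity) of a
Hermitian matrix (and `0` for non-Hermitian matrices). -/
noncomputable def morseIndex {m : ℕ} (A : Matrix (Fin m) (Fin m) ℂ) : ℕ :=
  if h : A.IsHermitian then (Finset.univ.filter fun i => h.eigenvalues i < 0).card else 0

namespace Matrix.IsHermitian

variable {𝕜 : Type*} [RCLike 𝕜] {A : Matrix (Fin 2) (Fin 2) 𝕜}

lemma eigenvalues_mul_fin_two (hA : A.IsHermitian) {d : ℝ} (hd : A.det = d) :
    hA.eigenvalues 0 * hA.eigenvalues 1 = d := by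
  rw [hA.det_eq_prod_eigenvalues, Fin.prod_univ_two] at hd
  exact_mod_cast hd

lemma eigenvalues_add_fin_two (hA : A.IsHermitian) {t : ℝ} (ht : A.trace = t) :
    hA.eigenvalues 0 + hA.eigenvalues 1 = t := by
  rw [hA.trace_eq_sum_eigenvalues, Fin.sum_univ_two] at ht
  exact_mod_cast ht

lemma posDef_of_det_pos_of_trace_pos_fin_two (hA : A.IsHermitian) {d t : ℝ}
    (hd : A.det = d) (ht : A.trace = t) (hd₀ : 0 < d) (ht₀ : 0 < t) : A.PosDef := by
  have hmul := hA.eigenvalues_mul_fin_two hd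
  have hadd := hA.eigenvalues_add_fin_two ht
  refine hA.posDef_iff_eigenvalues_pos.2 fun i => ?_
  -- positive product: both eigenvalues share a sign, and the positive sum fixes it
  rcases mul_pos_iff.1 (hmul ▸ hd₀) with ⟨h₀, h₁⟩ | ⟨h₀, h₁⟩
  · fin_cases i <;> assumption
  · linarith

end Matrix.IsHermitian

lemma morseIndex_eq_one_of_det_neg_fin_two {A : Matrix (Fin 2) (Fin 2) ℂ} (hA : A.IsHermitian)
    {d : ℝ} (hd : A.det = d) (hd₀ : d < 0) : morseIndex A = 1 := by
  have hmul := hA.eigenvalues_mul_fin_two hd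
  rw [morseIndex, dif_pos hA, Finset.card_filter, Fin.sum_univ_two]
  rcases mul_neg_iff.1 (hmul ▸ hd₀) with ⟨h₀, h₁⟩ | ⟨h₀, h₁⟩
  · rw [if_neg h₀.not_gt, if_pos h₁]
  · rw [if_pos h₀, if_neg h₁.not_gt]

lemma mkF_isHermitian (ω ωk γ ν : ℝ) : (mkF ω ωk γ ν).IsHermitian := by
  ext i j
  fin_cases i <;> fin_cases j <;> simp [mkF]

lemma mkF_trace (ω ωk γ ν : ℝ) : (mkF ω ωk γ ν).trace = ((2 * ν ^ 2 + 2 * ω : ℝ) : ℂ) := by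
  simp only [mkF, trace_fin_two_of]
  push_cast
  ring

lemma mkF_det (ω ωk γ ν : ℝ) :
    (mkF ω ωk γ ν).det =
      (((ν ^ 2 + 2 * (ω - ωk)) * (ν ^ 2 + 2 * ωk) - 4 * γ ^ 2 * ν ^ 2 : ℝ) : ℂ) := by
  simp only [mkF, det_fin_two_of]
  push_cast
  linear_combination (4 * γ ^ 2 * ν ^ 2 : ℂ) * Complex.I_sq

lemma νsqM_le_νsqP (ω ωk γ : ℝ) : νsqM ω ωk γ ≤ νsqP ω ωk γ := by
  rw [νsqM, νsqP]
  linarith [Real.sqrt_nonneg ((2 * γ ^ 2 - ω) ^ 2 - 4 * ωk * (ω - ωk))]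

section Filament

variable {ω ωk γ : ℝ}

lemma mkF_det_eq_mul (hdisc : 0 ≤ (2 * γ ^ 2 - ω) ^ 2 - 4 * ωk * (ω - ωk)) (ν : ℝ) :
    (mkF ω ωk γ ν).det = (((ν ^ 2 - νsqM ω ωk γ) * (ν ^ 2 - νsqP ω ωk γ) : ℝ) : ℂ) := by
  rw [mkF_det]
  congr 1
  rw [νsqM, νsqP]
  linear_combination Real.sq_sqrt hdisc

lemma mkF_posDef (hω : 0 < ω) (hdisc : 0 ≤ (2 * γ ^ 2 - ω) ^ 2 - 4 * ωk * (ω - ωk)) {ν : ℝ}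
    (hν : 0 < (ν ^ 2 - νsqM ω ωk γ) * (ν ^ 2 - νsqP ω ωk γ)) : (mkF ω ωk γ ν).PosDef :=
  (mkF_isHermitian ω ωk γ ν).posDef_of_det_pos_of_trace_pos_fin_two (mkF_det_eq_mul hdisc ν)
    (mkF_trace ω ωk γ ν) hν (show 0 < 2 * ν ^ 2 + 2 * ω by positivity)

lemma mkF_morseIndex_eq_one (hdisc : 0 ≤ (2 * γ ^ 2 - ω) ^ 2 - 4 * ωk * (ω - ωk)) {ν : ℝ}
    (hν : (ν ^ 2 - νsqM ω ωk γ) * (ν ^ 2 - νsqP ω ωk γ) < 0) : morseIndex (mkF ω ωk γ ν) = 1 :=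
  morseIndex_eq_one_of_det_neg_fin_two (mkF_isHermitian ω ωk γ ν) (mkF_det_eq_mul hdisc ν) hν

lemma νsqM_pos (hc : 0 < ωk * (ω - ωk)) (hg : 0 < 2 * γ ^ 2 - ω) : 0 < νsqM ω ωk γ := by
  have : Real.sqrt ((2 * γ ^ 2 - ω) ^ 2 - 4 * ωk * (ω - ωk)) < 2 * γ ^ 2 - ω :=
    (Real.sqrt_lt' hg).2 (by linarith)
  rw [νsqM]
  linarith

end Filament

theorem filament_block_omega_above (ω ωk γ : ℝ) (hωk : ωk > 0) (hω : ω > ωk)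
    (hγ : γ ^ 2 > ω / 2 + Real.sqrt (ωk * (ω - ωk))) :
    0 < νsqM ω ωk γ ∧ 0 < νsqP ω ωk γ ∧
    (mkF ω ωk γ 0).PosDef ∧
    (∀ ν : ℝ, Real.sqrt (νsqM ω ωk γ) < ν → ν < Real.sqrt (νsqP ω ωk γ) →
      morseIndex (mkF ω ωk γ ν) = 1) ∧
    (∀ ν : ℝ, Real.sqrt (νsqP ω ωk γ) < ν → (mkF ω ωk γ ν).PosDef) := by
  have hc : 0 < ωk * (ω - ωk) := mul_pos hωk (sub_pos.2 hω)
  have hgap : 2 * Real.sqrt (ωk * (ω - ωk)) < 2 * γ ^ 2 - ω := by linarith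
  have hdisc : 0 ≤ (2 * γ ^ 2 - ω) ^ 2 - 4 * ωk * (ω - ωk) := by
    nlinarith [Real.sq_sqrt hc.le, Real.sqrt_nonneg (ωk * (ω - ωk))]
  have hM := νsqM_pos hc (by linarith [Real.sqrt_nonneg (ωk * (ω - ωk))])
  have hP := hM.trans_le (νsqM_le_νsqP ω ωk γ)
  refine ⟨hM, hP, mkF_posDef (hωk.trans hω) hdisc (by simpa using mul_pos hM hP), fun ν hMν hνP => ?_,
    fun ν hPν => ?_⟩
  · have hν := (Real.sqrt_nonneg _).trans_lt hMν
    apply mkF_morseIndex_eq_one hdisc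
    exact mul_neg_of_pos_of_neg (sub_pos.2 ((Real.sqrt_lt' hν).1 hMν))
      (sub_neg.2 ((Real.lt_sqrt hν.le).1 hνP))
  · have hν := (Real.sqrt_nonneg _).trans_lt hPν
    have hPlt := (Real.sqrt_lt' hν).1 hPν
    exact mkF_posDef (hωk.trans hω) hdisc
      (mul_pos (by linarith [νsqM_le_νsqP ω ωk γ]) (sub_pos.2 hPlt))
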